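/- For the map (α, β) ↦ (φ, ξ) given by φ = (α + β - π)/2 and ξ = (sin(Ψ + α) - sin(Ψ + β) + sin(β - α)) / (2 sin Ψ (cos α - cos β)), the Jacobian determinant ∂(φ,ξ)/∂(α,β) equals (1/(4 sin Ψ)) · sin((α - β)/2) / sin((α + β)/2). -/

import Mathlib

open Real

/-- The direction angle `φ` of the chord from `β` to `α`. -/
noncomputable def chordPhi (α β : ℝ) : ℝ := (α + β - π) / 2

/-- The intersection point `ξ` of the chord from `β` to `α` with the segment `[0,1]×{0}`. -/
noncomputable def chordXi (Ψ α β : ℝ) : ℝ :=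
  (Real.sin (Ψ + α) - Real.sin (Ψ + β) + Real.sin (β - α)) /
    (2 * Real.sin Ψ * (Real.cos α - Real.cos β))

/-!
In the half-angle coordinates `u = (α + β)/2`, `v = (α - β)/2` the sum-to-product formulas
give `ξ = (cos v - cos (Ψ + u)) / (2 sin Ψ sin u)` wherever `sin v ≠ 0`, and `φ = u - π/2`.
In both partial derivatives of `ξ` the `u`-contributions are the same, so they cancel in the
Jacobian `(∂_β ξ - ∂_α ξ)/2`, which is therefore `-(1/2) ∂_v ξ = sin v / (4 sin Ψ sin u)`.
-/

noncomputable def chordXiHalf (Ψ u v : ℝ) : ℝ :=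
  (cos v - cos (Ψ + u)) / (2 * sin Ψ * sin u)

/-- The partial derivative `∂ chordXiHalf / ∂u`. -/
noncomputable def chordXiHalfDerivU (Ψ u v : ℝ) : ℝ :=
  (sin (Ψ + u) * sin u - (cos v - cos (Ψ + u)) * cos u) / (2 * sin Ψ * sin u ^ 2)

theorem hasDerivAt_chordPhi_left (α β : ℝ) : HasDerivAt (fun a => chordPhi a β) (1 / 2) α := by
  unfold chordPhi
  simpa using (((hasDerivAt_id α).add_const β).sub_const π).div_const 2

theorem hasDerivAt_chordPhi_right (α β : ℝ) : HasDerivAt (fun b => chordPhi α b) (1 / 2) β := by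
  unfold chordPhi
  simpa using (((hasDerivAt_id β).const_add α).sub_const π).div_const 2

theorem chordXi_eq_chordXiHalf {Ψ α β : ℝ} (hv : sin ((α - β) / 2) ≠ 0) :
    chordXi Ψ α β = chordXiHalf Ψ ((α + β) / 2) ((α - β) / 2) := by
  set u := (α + β) / 2
  set v := (α - β) / 2
  have hnum : sin (Ψ + α) - sin (Ψ + β) + sin (β - α) = -2 * sin v * (cos v - cos (Ψ + u)) := by
    rw [show Ψ + α = Ψ + u + v by ring, show Ψ + β = Ψ + u - v by ring,
      show β - α = -(2 * v) by ring, sin_add, sin_sub, sin_neg, sin_two_mul]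
    ring
  have hden : 2 * sin Ψ * (cos α - cos β) = -2 * sin v * (2 * sin Ψ * sin u) := by
    rw [cos_sub_cos]
    ring
  rw [chordXi, chordXiHalf, hnum, hden, mul_div_mul_left _ _ (by simpa using hv)]

theorem eventually_chordXi_eq_chordXiHalf {Ψ α β : ℝ} (hv : sin ((α - β) / 2) ≠ 0) :
    ∀ᶠ p : ℝ × ℝ in nhds (α, β),
      chordXi Ψ p.1 p.2 = chordXiHalf Ψ ((p.1 + p.2) / 2) ((p.1 - p.2) / 2) := by
  have hcont : Continuous fun p : ℝ × ℝ => sin ((p.1 - p.2) / 2) := by fun_prop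
  filter_upwards [(hcont.continuousAt (x := (α, β))).eventually_ne hv] with p hp
  exact chordXi_eq_chordXiHalf hp

theorem hasDerivAt_chordXiHalf_comp {Ψ f' g' x : ℝ} {f g : ℝ → ℝ} (hf : HasDerivAt f f' x)
    (hg : HasDerivAt g g' x) (hΨ : sin Ψ ≠ 0) (hu : sin (f x) ≠ 0) :
    HasDerivAt (fun t => chordXiHalf Ψ (f t) (g t))
      (-sin (g x) * g' / (2 * sin Ψ * sin (f x)) + f' * chordXiHalfDerivU Ψ (f x) (g x)) x := by
  have hnum := hg.cos.sub (hf.const_add Ψ).cos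
  have hden := hf.sin.const_mul (2 * sin Ψ)
  refine (hnum.div hden (by positivity)).congr_deriv ?_
  rw [chordXiHalfDerivU]
  field_simp
  simp only [Pi.sub_apply]
  ring

section Partials

variable {Ψ α β : ℝ} (hΨ : sin Ψ ≠ 0) (hu : sin ((α + β) / 2) ≠ 0) (hv : sin ((α - β) / 2) ≠ 0)
include hΨ hu hv

theorem hasDerivAt_chordXi_left :
    HasDerivAt (fun a => chordXi Ψ a β)
      ((-sin ((α - β) / 2) / (2 * sin Ψ * sin ((α + β) / 2)) +
        chordXiHalfDerivU Ψ ((α + β) / 2) ((α - β) / 2)) / 2) α := by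
  have hf : HasDerivAt (fun a => (a + β) / 2) (1 / 2) α := by
    simpa using ((hasDerivAt_id α).add_const β).div_const 2
  have hg : HasDerivAt (fun a => (a - β) / 2) (1 / 2) α := by
    simpa using ((hasDerivAt_id α).sub_const β).div_const 2
  have hξ : (fun a => chordXi Ψ a β) =ᶠ[nhds α]
      fun a => chordXiHalf Ψ ((a + β) / 2) ((a - β) / 2) :=
    ((continuous_id.prodMk continuous_const).tendsto α).eventually
      (eventually_chordXi_eq_chordXiHalf hv)
  exact ((hasDerivAt_chordXiHalf_comp hf hg hΨ hu).congr_deriv (by ring)).congr_of_eventuallyEq hξ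

theorem hasDerivAt_chordXi_right :
    HasDerivAt (fun b => chordXi Ψ α b)
      ((sin ((α - β) / 2) / (2 * sin Ψ * sin ((α + β) / 2)) +
        chordXiHalfDerivU Ψ ((α + β) / 2) ((α - β) / 2)) / 2) β := by
  have hf : HasDerivAt (fun b => (α + b) / 2) (1 / 2) β := by
    simpa using ((hasDerivAt_id β).const_add α).div_const 2
  have hg : HasDerivAt (fun b => (α - b) / 2) (-1 / 2) β := by
    simpa using ((hasDerivAt_id β).const_sub α).div_const 2
  have hξ : (fun b => chordXi Ψ α b) =ᶠ[nhds β]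
      fun b => chordXiHalf Ψ ((α + b) / 2) ((α - b) / 2) :=
    ((continuous_const.prodMk continuous_id).tendsto β).eventually
      (eventually_chordXi_eq_chordXiHalf hv)
  exact ((hasDerivAt_chordXiHalf_comp hf hg hΨ hu).congr_deriv (by ring)).congr_of_eventuallyEq hξ

end Partials

theorem sin_half_sub_ne_zero_of_cos_ne_cos {α β : ℝ} (h : cos α ≠ cos β) :
    sin ((α - β) / 2) ≠ 0 := by
  intro hv
  exact h (sub_eq_zero.mp (by rw [cos_sub_cos, hv, mul_zero]))

theorem chord_change_of_variables_jacobian_general (Ψ α β : ℝ)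
    (hΨ : Ψ ∈ Set.Ioo 0 (π/2))
    (hcos : Real.cos α ≠ Real.cos β) (hsin : Real.sin ((α + β)/2) ≠ 0) :
    (deriv (fun a => chordPhi a β) α) * (deriv (fun b => chordXi Ψ α b) β)
      - (deriv (fun b => chordPhi α b) β) * (deriv (fun a => chordXi Ψ a β) α)
      = (1 / (4 * Real.sin Ψ)) * (Real.sin ((α - β)/2) / Real.sin ((α + β)/2)) := by
  have hsΨ : sin Ψ ≠ 0 := (sin_pos_of_pos_of_lt_pi hΨ.1 (by linarith [hΨ.2, pi_pos])).ne'
  have hv := sin_half_sub_ne_zero_of_cos_ne_cos hcos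
  rw [(hasDerivAt_chordPhi_left α β).deriv, (hasDerivAt_chordPhi_right α β).deriv,
    (hasDerivAt_chordXi_left hsΨ hsin hv).deriv, (hasDerivAt_chordXi_right hsΨ hsin hv).deriv]
  ring

theorem chord_change_of_variables_jacobian (Ψ α β : ℝ)
    (hΨ : Ψ ∈ Set.Ioo 0 (π/2)) (hα : α ∈ Set.Ioo (-Ψ) Ψ) (hβ : β ∈ Set.Ioo Ψ π)
    (hcos : Real.cos α ≠ Real.cos β) (hsin : Real.sin ((α + β)/2) ≠ 0) :
    (deriv (fun a => chordPhi a β) α) * (deriv (fun b => chordXi Ψ α b) β)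
      - (deriv (fun b => chordPhi α b) β) * (deriv (fun a => chordXi Ψ a β) α)
      = (1 / (4 * Real.sin Ψ)) * (Real.sin ((α - β)/2) / Real.sin ((α + β)/2)) :=
  chord_change_of_variables_jacobian_general Ψ α β hΨ hcos hsin
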